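/- Let g be a complex finite-dimensional simple Lie algebra and V_0, …, V_k finite-dimensional g-modules (V_{k+1} := 0) such that Hom_g(g ⊗ V_s, V_{s+1}) ≠ 0 and Hom_g(∧²(g) ⊗ V_s, V_{s+2}) = 0 for 0 ≤ s ≤ k−1; fix nonzero p_s ∈ Hom_g(g ⊗ V_s, V_{s+1}) for 0 ≤ s ≤ k−1 and set p_k = 0. Then the formulas (x⊗t)·v = p_s(x ⊗ v) and (x⊗t^r)·v = 0 for r ≥ 2 (x ∈ g, v ∈ V_s) extend the natural g-action to a graded g[t]-module structure on V = ⊕_{s=0}^k V_s with V[s] ≅ V_s as g-modules; moreover if all p_s (0 ≤ s ≤ k−1) are surjective and V_0 = U(g)·v_0, then V = U(g[t])·v_0. -/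

import Mathlib

open scoped TensorProduct DirectSum Pointwise BigOperators

namespace KRPaper

/-- The classical Cartan types `A`, `B`, `C`, `D`. -/
inductive ClassicalType : Type
  | A | B | C | D
deriving DecidableEq

/-- The coefficient `ε_i(θ)` of the simple root `α_i` in the highest root `θ`,
for a simple Lie algebra of the given classical type and rank. -/
def epsTheta : ClassicalType → ℕ → ℕ → ℕ
  | ClassicalType.A, _, _ => 1
  | ClassicalType.B, _, i => if i = 1 then 1 else 2
  | ClassicalType.C, n, i => if i = n then 1 else 2
  | ClassicalType.D, n, i => if i = 1 ∨ i = n - 1 ∨ i = n then 1 else 2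

/-- `ď_i = 2/(α_i,α_i)` for a simple Lie algebra of the given classical type and rank,
with the invariant form normalized so that `(θ,θ) = 2`. -/
def dcheck : ClassicalType → ℕ → ℕ → ℕ
  | ClassicalType.B, n, i => if i = n then 2 else 1
  | ClassicalType.C, n, i => if i = n then 1 else 2
  | _, _, _ => 1

/-- The data of a complex finite-dimensional simple Lie algebra of classical type:
a Cartan subalgebra `h`, simple roots `α i` (`i ∈ {1,…,n}`), fundamental weights `ω i`
(with `ω 0 = 0`), the finite set `Rplus` of positive roots, the highest root `θ`,
the normalized invariant form `B` on `h*` with `B θ θ = 2`, and for each positive root `β`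
root vectors `xp β ∈ g_β`, `xm β ∈ g_{-β}` and the coroot `hc β ∈ h` with the standard
`sl₂`-relations. -/
structure LieData where
  ctype : ClassicalType
  n : ℕ
  npos : 0 < n
  g : Type
  [lieRing : LieRing g]
  [lieAlg : LieAlgebra ℂ g]
  [finDim : FiniteDimensional ℂ g]
  simple : LieAlgebra.IsSimple ℂ g
  h : LieSubalgebra ℂ g
  cartan : h.IsCartanSubalgebra
  α : ℕ → Module.Dual ℂ h
  ω : ℕ → Module.Dual ℂ h
  ω_zero : ω 0 = 0
  Rplus : Finset (Module.Dual ℂ h)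
  α_mem : ∀ i ∈ Finset.Icc 1 n, α i ∈ Rplus
  θ : Module.Dual ℂ h
  θ_mem : θ ∈ Rplus
  θ_eq : θ = ∑ i ∈ Finset.Icc 1 n, (epsTheta ctype n i : ℂ) • α i
  B : Module.Dual ℂ h →ₗ[ℂ] Module.Dual ℂ h →ₗ[ℂ] ℂ
  B_symm : ∀ lam mu, B lam mu = B mu lam
  B_theta : B θ θ = 2
  B_dcheck : ∀ i ∈ Finset.Icc 1 n, (dcheck ctype n i : ℂ) * B (α i) (α i) = 2
  xp : Module.Dual ℂ h → g
  xm : Module.Dual ℂ h → g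
  hc : Module.Dual ℂ h → h
  xp_ne : ∀ β ∈ Rplus, xp β ≠ 0
  xm_ne : ∀ β ∈ Rplus, xm β ≠ 0
  wt_xp : ∀ β ∈ Rplus, ∀ H : h, ⁅(H : g), xp β⁆ = β H • xp β
  wt_xm : ∀ β ∈ Rplus, ∀ H : h, ⁅(H : g), xm β⁆ = -(β H) • xm β
  sl2 : ∀ β ∈ Rplus, ⁅xp β, xm β⁆ = (hc β : g)
  pairing2 : ∀ β ∈ Rplus, β (hc β) = 2
  ω_pair : ∀ i ∈ Finset.Icc 1 n, ∀ j ∈ Finset.Icc 1 n, ω i (hc (α j)) = if i = j then 1 else 0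

attribute [instance] LieData.lieRing LieData.lieAlg LieData.finDim

/-- The positive cone `Q^+` of the root lattice: the `ℕ`-span of the simple roots. -/
def LieData.Qplus (D : LieData) : Set (Module.Dual ℂ D.h) :=
  {η | ∃ c : ℕ → ℕ, η = ∑ i ∈ Finset.Icc 1 D.n, (c i : ℂ) • D.α i}

/-- A representation of a complex Lie algebra `g` on a complex vector space. -/
structure Rep (g : Type) [LieRing g] [LieAlgebra ℂ g] where
  V : Type
  [addCommGroup : AddCommGroup V]
  [modV : Module ℂ V]
  ρ : g →ₗ[ℂ] Module.End ℂ V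
  ρ_bracket : ∀ x y : g, ρ ⁅x, y⁆ = ρ x * ρ y - ρ y * ρ x

attribute [instance] Rep.addCommGroup Rep.modV

/-- An irreducible finite-dimensional representation. -/
def IsIrrFD {g : Type} [LieRing g] [LieAlgebra ℂ g] (M : Rep g) : Prop :=
  FiniteDimensional ℂ M.V ∧ (∃ v : M.V, v ≠ 0) ∧
    ∀ U : Submodule ℂ M.V, (∀ x : g, ∀ u ∈ U, M.ρ x u ∈ U) → U = ⊥ ∨ U = ⊤

/-- `M` is (a copy of) the irreducible finite-dimensional `g`-module `V(lam)` with
highest weight `lam`. -/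
def LieData.IsHW (D : LieData) (M : Rep D.g) (lam : Module.Dual ℂ D.h) : Prop :=
  IsIrrFD M ∧
    ∃ v : M.V, v ≠ 0 ∧ (∀ H : D.h, M.ρ (H : D.g) v = lam H • v) ∧
      ∀ β ∈ D.Rplus, M.ρ (D.xp β) v = 0

/-- A module for the current algebra `g[t] = g ⊗ ℂ[t]`: the operator `ρ r x` is the
action of `x ⊗ t^r`. -/
structure CRep (g : Type) [LieRing g] [LieAlgebra ℂ g] where
  V : Type
  [addCommGroup : AddCommGroup V]
  [modV : Module ℂ V]
  ρ : ℕ → g →ₗ[ℂ] Module.End ℂ V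
  ρ_bracket : ∀ (r s : ℕ) (x y : g),
    ρ (r + s) ⁅x, y⁆ = ρ r x * ρ s y - ρ s y * ρ r x

attribute [instance] CRep.addCommGroup CRep.modV

/-- A `ℤ₊`-graded module for the current algebra `g[t]`. -/
structure GCRep (g : Type) [LieRing g] [LieAlgebra ℂ g] extends CRep g where
  gr : ℕ → Submodule ℂ V
  internal : DirectSum.IsInternal gr
  map_gr : ∀ (r : ℕ) (x : g) (s : ℕ), ∀ v ∈ gr s, ρ r x v ∈ gr (s + r)

/-- The action of `g = g ⊗ t⁰` on the graded piece `gr s` of a graded `g[t]`-module. -/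
def GCRep.grAct {g : Type} [LieRing g] [LieAlgebra ℂ g] (K : GCRep g) (s : ℕ)
    (x : g) (w : K.gr s) : K.gr s :=
  ⟨K.ρ 0 x w, K.map_gr 0 x s w w.2⟩

/-- `v` generates the `g[t]`-module `M` (i.e. `M = U(g[t])·v`). -/
def genTop {g : Type} [LieRing g] [LieAlgebra ℂ g] (M : CRep g) (v : M.V) : Prop :=
  ∀ U : Submodule ℂ M.V, v ∈ U → (∀ (r : ℕ) (x : g), ∀ u ∈ U, M.ρ r x u ∈ U) → U = ⊤

/-- The defining relations of the Kirillov–Reshetikhin module `KR(mω_i)` for a vector `v`: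
`n⁺[t]·v = 0`, `H·v = mω_i(H)v` and `(H ⊗ t^r)·v = 0` for `r ≥ 1`,
`(x⁻_{α_i})^{m+1}·v = 0`, `(x⁻_{α_i} ⊗ t)·v = 0`, and `x⁻_{α_j}·v = 0` for `j ≠ i`. -/
def KRrel (D : LieData) (i m : ℕ) (M : CRep D.g) (v : M.V) : Prop :=
  (∀ β ∈ D.Rplus, ∀ r : ℕ, M.ρ r (D.xp β) v = 0) ∧
  (∀ H : D.h, M.ρ 0 (H : D.g) v = ((m : ℂ) * D.ω i H) • v) ∧
  (∀ H : D.h, ∀ r : ℕ, 0 < r → M.ρ r (H : D.g) v = 0) ∧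
  ((M.ρ 0 (D.xm (D.α i)) ^ (m + 1)) v = 0) ∧
  (M.ρ 1 (D.xm (D.α i)) v = 0) ∧
  (∀ j ∈ Finset.Icc 1 D.n, j ≠ i → M.ρ 0 (D.xm (D.α j)) v = 0)

/-- The Kirillov–Reshetikhin module `KR(mω_i)`: the cyclic graded `g[t]`-module generated
by a vector `v` subject exactly to the relations `KRrel` (universality makes it the
maximal such cyclic module). -/
structure KRModule (D : LieData) (i m : ℕ) extends GCRep D.g where
  v : V
  v_ne : v ≠ 0
  v_gr : v ∈ gr 0
  rel : KRrel D i m toCRep v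
  cyclic : genTop toCRep v
  universal : ∀ (N : CRep D.g) (w : N.V), KRrel D i m N w →
    ∃ f : V →ₗ[ℂ] N.V, f v = w ∧
      ∀ (r : ℕ) (x : D.g) (u : V), f (ρ r x u) = N.ρ r x (f u)

/-- The set `P^+(i,1)` of the paper. -/
noncomputable def LieData.P1 (D : LieData) (i : ℕ) : Finset (Module.Dual ℂ D.h) := by
  classical
  exact if epsTheta D.ctype D.n i = dcheck D.ctype D.n i then {D.ω i}
    else (Finset.range (i / 2 + 1)).image fun j => D.ω (i - 2 * j)

/-- The set `P^+(i,2)` of the paper in the cases where `ď_i = 2`. -/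
noncomputable def LieData.P2 (D : LieData) (i : ℕ) : Finset (Module.Dual ℂ D.h) := by
  classical
  exact if D.ctype = ClassicalType.C then (Finset.range (i + 1)).image fun j => (2 : ℂ) • D.ω j
    else {(2 : ℂ) • D.ω D.n} ∪ (Finset.range (D.n / 2)).image fun j => D.ω (D.n - 2 * (j + 1))

/-- The sets `P^+(i,m)` for `0 ≤ m ≤ ď_i`. -/
noncomputable def LieData.Pbase (D : LieData) (i m : ℕ) : Finset (Module.Dual ℂ D.h) :=
  if m = 0 then {0} else if m = 1 then D.P1 i else D.P2 i

/-- The set `P^+(i,m)`, defined by `P^+(i,m) = P^+(i,ď_i) + P^+(i,m-ď_i)` for `m > ď_i`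
(here in the equivalent closed form using `m = ď_i·(m/ď_i) + m % ď_i`). -/
noncomputable def LieData.Pplus (D : LieData) (i m : ℕ) : Finset (Module.Dual ℂ D.h) := by
  classical
  exact D.Pbase i (m % dcheck D.ctype D.n i) +
    (m / dcheck D.ctype D.n i) • D.Pbase i (dcheck D.ctype D.n i)

/-- The enumeration `μ_0, …, μ_k` of `P^+(i,ď_i)` with `μ_j - μ_{j+1} ∈ R^+` and
`μ_j - μ_{j+2} ∈ Q^+ \ R^+`. -/
structure KREnum (D : LieData) (i : ℕ) where
  k : ℕ
  μ : ℕ → Module.Dual ℂ D.h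
  enum : (D.Pplus i (dcheck D.ctype D.n i) : Set (Module.Dual ℂ D.h)) = μ '' {j | j ≤ k}
  μ_inj : ∀ a ≤ k, ∀ b ≤ k, μ a = μ b → a = b
  μ_zero : μ 0 = (dcheck D.ctype D.n i : ℂ) • D.ω i
  step : ∀ j, j + 1 ≤ k → μ j - μ (j + 1) ∈ D.Rplus
  step2 : ∀ j, j + 2 ≤ k → μ j - μ (j + 2) ∈ D.Qplus ∧ μ j - μ (j + 2) ∉ D.Rplus

/-- `j` is a reduced expression `μ = m₁ω_i + μ_{j 0} + ⋯ + μ_{j (m₀-1)}` of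
`μ ∈ P^+(i,m)`: each `j r` is minimal such that the partial difference stays in the
appropriate set `P^+(i, m - (r+1)ď_i)`. -/
def IsReducedExpr (D : LieData) (i m : ℕ) (E : KREnum D i) (j : ℕ → ℕ)
    (μ : Module.Dual ℂ D.h) : Prop :=
  (∀ r < m / dcheck D.ctype D.n i, j r ≤ E.k) ∧
  μ = ((m % dcheck D.ctype D.n i : ℕ) : ℂ) • D.ω i +
      ∑ r ∈ Finset.range (m / dcheck D.ctype D.n i), E.μ (j r) ∧
  ∀ r < m / dcheck D.ctype D.n i,
    (μ - ∑ s ∈ Finset.range (r + 1), E.μ (j s))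
        ∈ D.Pplus i (m - (r + 1) * dcheck D.ctype D.n i) ∧
    ∀ j' < j r, (μ - ∑ s ∈ Finset.range r, E.μ (j s)) - E.μ j'
        ∉ D.Pplus i (m - (r + 1) * dcheck D.ctype D.n i)

/-- `AbsVal D i m E μ s` says `|μ| = s`, i.e. `μ` has a reduced expression
`μ = m₁ω_i + μ_{j_1} + ⋯ + μ_{j_{m₀}}` with `s = j_1 + ⋯ + j_{m₀}`. -/
def AbsVal (D : LieData) (i m : ℕ) (E : KREnum D i) (μ : Module.Dual ℂ D.h)
    (s : ℕ) : Prop :=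
  ∃ j : ℕ → ℕ, IsReducedExpr D i m E j μ ∧
    s = ∑ r ∈ Finset.range (m / dcheck D.ctype D.n i), j r

/-- `p` is a `g`-module homomorphism `g ⊗ M → N`. -/
def IsEquivMap2 {g : Type} [LieRing g] [LieAlgebra ℂ g] (M N : Rep g)
    (p : g →ₗ[ℂ] M.V →ₗ[ℂ] N.V) : Prop :=
  ∀ (y x : g) (v : M.V), N.ρ y (p x v) = p ⁅y, x⁆ v + p x (M.ρ y v)

/-- `q` is a `g`-module homomorphism `∧²(g) ⊗ M → N` (an alternating bilinear-in-`g`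
equivariant map). -/
def IsEquivAlt3 {g : Type} [LieRing g] [LieAlgebra ℂ g] (M N : Rep g)
    (q : g →ₗ[ℂ] g →ₗ[ℂ] M.V →ₗ[ℂ] N.V) : Prop :=
  (∀ x v, q x x v = 0) ∧
  ∀ (y x₁ x₂ : g) (v : M.V),
    N.ρ y (q x₁ x₂ v) = q ⁅y, x₁⁆ x₂ v + q x₁ ⁅y, x₂⁆ v + q x₁ x₂ (M.ρ y v)

/-- The action of an endomorphism `f` of `W` on `W^{⊗ m₀}` as a derivation
(i.e. `Σ_j 1 ⊗ ⋯ ⊗ f ⊗ ⋯ ⊗ 1`). -/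
noncomputable def piDer (W : Type) [AddCommGroup W] [Module ℂ W] (m0 : ℕ)
    (f : Module.End ℂ W) : Module.End ℂ (⨂[ℂ] _ : Fin m0, W) :=
  ∑ j : Fin m0,
    PiTensorProduct.map (Function.update (fun _ : Fin m0 => (LinearMap.id : W →ₗ[ℂ] W)) j f)


section Statement6Aux

variable {g : Type} [LieRing g] [LieAlgebra ℂ g]

/-- The action of `x ⊗ t⁰` on the direct sum. -/
noncomputable def rho0 (k : ℕ) (V : ℕ → Rep g) (x : g) :
    Module.End ℂ (⨁ s : Fin (k + 1), (V (s : ℕ)).V) :=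
  DirectSum.toModule ℂ (Fin (k + 1)) _ fun s =>
    (DirectSum.lof ℂ (Fin (k + 1)) (fun t => (V (t : ℕ)).V) s) ∘ₗ ((V (s : ℕ)).ρ x)

@[simp] lemma rho0_lof (k : ℕ) (V : ℕ → Rep g) (x : g) (s : Fin (k + 1))
    (v : (V (s : ℕ)).V) :
    rho0 k V x (DirectSum.lof ℂ (Fin (k + 1)) (fun t => (V (t : ℕ)).V) s v)
      = DirectSum.lof ℂ (Fin (k + 1)) (fun t => (V (t : ℕ)).V) s ((V (s : ℕ)).ρ x v) := by
  unfold rho0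
  rw [DirectSum.toModule_lof]
  rfl

/-- The action of `x ⊗ t` on the direct sum. -/
noncomputable def rho1 (k : ℕ) (V : ℕ → Rep g)
    (p : ∀ s : ℕ, g →ₗ[ℂ] (V s).V →ₗ[ℂ] (V (s + 1)).V) (x : g) :
    Module.End ℂ (⨁ s : Fin (k + 1), (V (s : ℕ)).V) :=
  DirectSum.toModule ℂ (Fin (k + 1)) _ fun s =>
    if h : (s : ℕ) + 1 ≤ k then
      (DirectSum.lof ℂ (Fin (k + 1)) (fun t => (V (t : ℕ)).V) ⟨(s : ℕ) + 1, Nat.lt_succ_of_le h⟩)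
        ∘ₗ (p (s : ℕ) x)
    else 0

@[simp] lemma rho1_lof (k : ℕ) (V : ℕ → Rep g)
    (p : ∀ s : ℕ, g →ₗ[ℂ] (V s).V →ₗ[ℂ] (V (s + 1)).V) (x : g) (s : Fin (k + 1))
    (v : (V (s : ℕ)).V) :
    rho1 k V p x (DirectSum.lof ℂ (Fin (k + 1)) (fun t => (V (t : ℕ)).V) s v)
      = if h : (s : ℕ) + 1 ≤ k then
          DirectSum.lof ℂ (Fin (k + 1)) (fun t => (V (t : ℕ)).V)
            ⟨(s : ℕ) + 1, Nat.lt_succ_of_le h⟩ (p (s : ℕ) x v)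
        else 0 := by
  unfold rho1
  rw [DirectSum.toModule_lof]
  split <;> simp

/-- `rho0` bundled as a linear map in `x`. -/
noncomputable def rho0L (k : ℕ) (V : ℕ → Rep g) :
    g →ₗ[ℂ] Module.End ℂ (⨁ s : Fin (k + 1), (V (s : ℕ)).V) where
  toFun := rho0 k V
  map_add' x y := by
    ext s v
    simp [map_add]
  map_smul' c x := by
    ext s v
    simp

/-- `rho1` bundled as a linear map in `x`. -/
noncomputable def rho1L (k : ℕ) (V : ℕ → Rep g)
    (p : ∀ s : ℕ, g →ₗ[ℂ] (V s).V →ₗ[ℂ] (V (s + 1)).V) :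
    g →ₗ[ℂ] Module.End ℂ (⨁ s : Fin (k + 1), (V (s : ℕ)).V) where
  toFun := rho1 k V p
  map_add' x y := by
    ext s v
    simp only [LinearMap.coe_comp, Function.comp_apply, rho1_lof, LinearMap.add_apply,
      map_add]
    split <;> simp
  map_smul' c x := by
    ext s v
    simp only [LinearMap.coe_comp, Function.comp_apply, rho1_lof, RingHom.id_apply,
      LinearMap.smul_apply, map_smul]
    split <;> simp

@[simp] lemma rho0L_apply (k : ℕ) (V : ℕ → Rep g) (x : g) :
    rho0L k V x = rho0 k V x := rfl

@[simp] lemma rho1L_apply (k : ℕ) (V : ℕ → Rep g)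
    (p : ∀ s : ℕ, g →ₗ[ℂ] (V s).V →ₗ[ℂ] (V (s + 1)).V) (x : g) :
    rho1L k V p x = rho1 k V p x := rfl

/-- Key vanishing: if there are no equivariant maps `∧²(g) ⊗ V_s → V_{s+2}`, then the
compositions `p_{s+1} ∘ p_s` commute in the `g`-arguments. -/
lemma pp_comm (V : ℕ → Rep g)
    (p : ∀ s : ℕ, g →ₗ[ℂ] (V s).V →ₗ[ℂ] (V (s + 1)).V)
    (hp_equiv : ∀ s, IsEquivMap2 (V s) (V (s + 1)) (p s)) (s : ℕ)
    (hhom : ∀ q : g →ₗ[ℂ] g →ₗ[ℂ] (V s).V →ₗ[ℂ] (V (s + 2)).V,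
        IsEquivAlt3 (V s) (V (s + 2)) q → q = 0)
    (x y : g) (v : (V s).V) :
    p (s + 1) x (p s y v) = p (s + 1) y (p s x v) := by
  classical
  let q : g →ₗ[ℂ] g →ₗ[ℂ] (V s).V →ₗ[ℂ] (V (s + 2)).V :=
    LinearMap.mk₂ ℂ
      (fun a b => ((p (s + 1) a) ∘ₗ (p s b) : (V s).V →ₗ[ℂ] (V (s + 2)).V)
        - ((p (s + 1) b) ∘ₗ (p s a)))
      (by
        intro a a' b
        simp only [map_add, LinearMap.add_comp, LinearMap.comp_add]
        abel)
      (by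
        intro c a b
        simp only [map_smul, LinearMap.smul_comp, LinearMap.comp_smul, smul_sub])
      (by
        intro a b b'
        simp only [map_add, LinearMap.add_comp, LinearMap.comp_add]
        abel)
      (by
        intro c a b
        simp only [map_smul, LinearMap.smul_comp, LinearMap.comp_smul, smul_sub])
  have halt : ∀ (a : g) (w : (V s).V), q a a w = 0 := by
    intro a w
    simp [q, LinearMap.mk₂_apply]
  have hequiv : ∀ (yy x₁ x₂ : g) (w : (V s).V),
      (V (s + 2)).ρ yy (q x₁ x₂ w)
        = q ⁅yy, x₁⁆ x₂ w + q x₁ ⁅yy, x₂⁆ w + q x₁ x₂ ((V s).ρ yy w) := by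
    intro yy x₁ x₂ w
    have h1 : (V (s + 2)).ρ yy (p (s + 1) x₁ (p s x₂ w))
        = p (s + 1) ⁅yy, x₁⁆ (p s x₂ w) + p (s + 1) x₁ ((V (s + 1)).ρ yy (p s x₂ w)) :=
      hp_equiv (s + 1) yy x₁ (p s x₂ w)
    have h2 : (V (s + 2)).ρ yy (p (s + 1) x₂ (p s x₁ w))
        = p (s + 1) ⁅yy, x₂⁆ (p s x₁ w) + p (s + 1) x₂ ((V (s + 1)).ρ yy (p s x₁ w)) :=
      hp_equiv (s + 1) yy x₂ (p s x₁ w)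
    have h3 := hp_equiv s yy x₂ w
    have h4 := hp_equiv s yy x₁ w
    simp only [q, LinearMap.mk₂_apply, LinearMap.sub_apply, LinearMap.comp_apply, map_sub]
    rw [h1, h2, h3, h4]
    simp only [map_add]
    abel
  have hq : q = 0 := hhom q ⟨halt, hequiv⟩
  have h0 : q x y v = 0 := by rw [hq]; rfl
  have h0' : p (s + 1) x (p s y v) - p (s + 1) y (p s x v) = 0 := by
    simpa [q, LinearMap.mk₂_apply] using h0
  exact sub_eq_zero.mp h0'

lemma rho_bracket00 (k : ℕ) (V : ℕ → Rep g) (x y : g) :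
    rho0L k V ⁅x, y⁆ = rho0L k V x * rho0L k V y - rho0L k V y * rho0L k V x := by
  ext t v
  simp only [rho0L_apply, LinearMap.coe_comp, Function.comp_apply, rho0_lof,
    LinearMap.sub_apply, Module.End.mul_apply]
  rw [(V (t : ℕ)).ρ_bracket x y]
  simp

lemma rho_bracket01 (k : ℕ) (V : ℕ → Rep g)
    (p : ∀ s : ℕ, g →ₗ[ℂ] (V s).V →ₗ[ℂ] (V (s + 1)).V)
    (hp_equiv : ∀ s, IsEquivMap2 (V s) (V (s + 1)) (p s)) (x y : g) :
    rho1L k V p ⁅x, y⁆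
      = rho0L k V x * rho1L k V p y - rho1L k V p y * rho0L k V x := by
  ext t v
  simp only [rho0L_apply, rho1L_apply, LinearMap.coe_comp, Function.comp_apply,
    rho1_lof, rho0_lof, LinearMap.sub_apply, Module.End.mul_apply]
  split_ifs with h
  · rw [rho0_lof]
    rw [show (V (((⟨(t : ℕ) + 1, by omega⟩ : Fin (k + 1)) : ℕ))).ρ x (p (t : ℕ) y v)
        = p (t : ℕ) ⁅x, y⁆ v + p (t : ℕ) y ((V (t : ℕ)).ρ x v) from
      hp_equiv (t : ℕ) x y v]
    rw [map_add]
    abel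
  · simp

lemma rho_bracket11 (k : ℕ) (V : ℕ → Rep g)
    (p : ∀ s : ℕ, g →ₗ[ℂ] (V s).V →ₗ[ℂ] (V (s + 1)).V)
    (hp_equiv : ∀ s, IsEquivMap2 (V s) (V (s + 1)) (p s))
    (hhom2 : ∀ s < k, ∀ q : g →ₗ[ℂ] g →ₗ[ℂ] (V s).V →ₗ[ℂ] (V (s + 2)).V,
        IsEquivAlt3 (V s) (V (s + 2)) q → q = 0) (x y : g) :
    (0 : Module.End ℂ (⨁ s : Fin (k + 1), (V (s : ℕ)).V))
      = rho1L k V p x * rho1L k V p y - rho1L k V p y * rho1L k V p x := by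
  symm
  ext t v
  simp only [rho1L_apply, LinearMap.coe_comp, Function.comp_apply, LinearMap.sub_apply,
    Module.End.mul_apply, rho1_lof, LinearMap.zero_comp, LinearMap.zero_apply]
  split_ifs with h
  · rw [rho1_lof, rho1_lof]
    by_cases h2 : (t : ℕ) + 1 + 1 ≤ k
    · rw [dif_pos (show ((⟨(t : ℕ) + 1, by omega⟩ : Fin (k + 1)) : ℕ) + 1 ≤ k from h2)]
      rw [dif_pos (show ((⟨(t : ℕ) + 1, by omega⟩ : Fin (k + 1)) : ℕ) + 1 ≤ k from h2)]
      rw [show (p (((⟨(t : ℕ) + 1, by omega⟩ : Fin (k + 1)) : ℕ)) x (p (t : ℕ) y v))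
          = p ((t : ℕ) + 1) y (p (t : ℕ) x v) from
        pp_comm V p hp_equiv (t : ℕ) (hhom2 (t : ℕ) (by omega)) x y v]
      simp
    · rw [dif_neg (show ¬ (((⟨(t : ℕ) + 1, by omega⟩ : Fin (k + 1)) : ℕ) + 1 ≤ k) from h2)]
      rw [dif_neg (show ¬ (((⟨(t : ℕ) + 1, by omega⟩ : Fin (k + 1)) : ℕ) + 1 ≤ k) from h2)]
      simp
  · simp

end Statement6Aux

/-- Given `g`-modules `V_0, …, V_k` (with `V_s = 0` for `s > k`) such
that `Hom_g(g ⊗ V_s, V_{s+1}) ≠ 0` and `Hom_g(∧²(g) ⊗ V_s, V_{s+2}) = 0` for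
`0 ≤ s ≤ k-1`, and nonzero `p_s ∈ Hom_g(g ⊗ V_s, V_{s+1})`, the formulas
`(x⊗t)·v = p_s(x ⊗ v)` and `(x⊗t^r)·v = 0` for `r ≥ 2` extend the natural `g`-action
to a graded `g[t]`-module structure on `V = ⊕_{s=0}^k V_s`; moreover if all the `p_s`
are surjective and `V_0 = U(g)·v₀` then `V = U(g[t])·v₀`. -/
theorem statement6 (g : Type) [LieRing g] [LieAlgebra ℂ g] [FiniteDimensional ℂ g]
    (hg : LieAlgebra.IsSimple ℂ g) (k : ℕ) (V : ℕ → Rep g)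
    (hV : ∀ s, FiniteDimensional ℂ (V s).V)
    (hzero : ∀ s, k < s → ∀ w : (V s).V, w = 0)
    (p : ∀ s : ℕ, g →ₗ[ℂ] (V s).V →ₗ[ℂ] (V (s + 1)).V)
    (hp_equiv : ∀ s, IsEquivMap2 (V s) (V (s + 1)) (p s))
    (hp_ne : ∀ s < k, p s ≠ 0)
    (hhom2 : ∀ s < k, ∀ q : g →ₗ[ℂ] g →ₗ[ℂ] (V s).V →ₗ[ℂ] (V (s + 2)).V,
        IsEquivAlt3 (V s) (V (s + 2)) q → q = 0) :
    ∃ ρt : ℕ → g →ₗ[ℂ] Module.End ℂ (⨁ s : Fin (k + 1), (V (s : ℕ)).V),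
      (∀ (r s : ℕ) (x y : g), ρt (r + s) ⁅x, y⁆ = ρt r x * ρt s y - ρt s y * ρt r x) ∧
      (∀ (x : g) (s : Fin (k + 1)) (v : (V (s : ℕ)).V),
          ρt 0 x (DirectSum.lof ℂ (Fin (k + 1)) (fun t => (V (t : ℕ)).V) s v)
            = DirectSum.lof ℂ (Fin (k + 1)) (fun t => (V (t : ℕ)).V) s ((V (s : ℕ)).ρ x v)) ∧
      (∀ (x : g) (s : Fin (k + 1)) (v : (V (s : ℕ)).V),
          ρt 1 x (DirectSum.lof ℂ (Fin (k + 1)) (fun t => (V (t : ℕ)).V) s v)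
            = if h : (s : ℕ) + 1 ≤ k
              then DirectSum.lof ℂ (Fin (k + 1)) (fun t => (V (t : ℕ)).V)
                     ⟨(s : ℕ) + 1, by omega⟩ (p (s : ℕ) x v)
              else 0) ∧
      (∀ r, 2 ≤ r → ρt r = 0) ∧
      ((∀ s < k, Function.Surjective (TensorProduct.lift (p s))) →
        ∀ v0 : (V 0).V,
          (∀ U : Submodule ℂ (V 0).V, v0 ∈ U →
              (∀ x : g, ∀ u ∈ U, (V 0).ρ x u ∈ U) → U = ⊤) →
          ∀ U : Submodule ℂ (⨁ s : Fin (k + 1), (V (s : ℕ)).V),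
            DirectSum.lof ℂ (Fin (k + 1)) (fun t => (V (t : ℕ)).V) (0 : Fin (k + 1)) v0 ∈ U →
            (∀ (r : ℕ) (x : g), ∀ u ∈ U, ρt r x u ∈ U) → U = ⊤) := by
  classical
  refine ⟨fun r => if r = 0 then rho0L k V else if r = 1 then rho1L k V p else 0,
    ?_, ?_, ?_, ?_, ?_⟩
  · -- the bracket relations
    intro r s x y
    rcases r with _ | _ | r <;> rcases s with _ | _ | s
    · -- (0,0)
      exact rho_bracket00 k V x y
    · -- (0,1)
      exact rho_bracket01 k V p hp_equiv x y
    · -- (0, s+2)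
      have hA : ¬ (0 + (s + 2) = 0) := by omega
      have hB : ¬ (0 + (s + 2) = 1) := by omega
      have hC : ¬ (s + 2 = 0) := by omega
      have hD : ¬ (s + 2 = 1) := by omega
      simp [hA, hB, hC, hD]
    · -- (1,0)
      show rho1L k V p ⁅x, y⁆
          = rho1L k V p x * rho0L k V y - rho0L k V y * rho1L k V p x
      rw [← lie_skew x y, map_neg, rho_bracket01 k V p hp_equiv y x, neg_sub]
    · -- (1,1)
      show (0 : g →ₗ[ℂ] Module.End ℂ (⨁ s : Fin (k + 1), (V (s : ℕ)).V)) ⁅x, y⁆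
          = rho1L k V p x * rho1L k V p y - rho1L k V p y * rho1L k V p x
      rw [LinearMap.zero_apply]
      exact rho_bracket11 k V p hp_equiv hhom2 x y
    · -- (1, s+2)
      have hA : ¬ (1 + (s + 2) = 0) := by omega
      have hB : ¬ (1 + (s + 2) = 1) := by omega
      have hC : ¬ (s + 2 = 0) := by omega
      have hD : ¬ (s + 2 = 1) := by omega
      simp [hA, hB, hC, hD]
    · -- (r+2, 0)
      have hA : ¬ (r + 2 + 0 = 0) := by omega
      have hB : ¬ (r + 2 + 0 = 1) := by omega
      have hC : ¬ (r + 2 = 0) := by omega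
      have hD : ¬ (r + 2 = 1) := by omega
      simp [hA, hB, hC, hD]
    · -- (r+2, 1)
      have hA : ¬ (r + 2 + 1 = 0) := by omega
      have hB : ¬ (r + 2 + 1 = 1) := by omega
      have hC : ¬ (r + 2 = 0) := by omega
      have hD : ¬ (r + 2 = 1) := by omega
      simp [hA, hB, hC, hD]
    · -- (r+2, s+2)
      have hA : ¬ (r + 2 + (s + 2) = 0) := by omega
      have hB : ¬ (r + 2 + (s + 2) = 1) := by omega
      have hC : ¬ (r + 2 = 0) := by omega
      have hD : ¬ (r + 2 = 1) := by omega
      have hE : ¬ (s + 2 = 0) := by omega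
      have hF : ¬ (s + 2 = 1) := by omega
      simp [hA, hB, hC, hD, hE, hF]
  · -- ρt 0 acts diagonally
    intro x s v
    simp
  · -- ρt 1 shifts the degree by one via p
    intro x s v
    show rho1L k V p x (DirectSum.lof ℂ (Fin (k + 1)) (fun t => (V (t : ℕ)).V) s v) = _
    rw [rho1L_apply, rho1_lof]
  · -- ρt r = 0 for r ≥ 2
    intro r hr
    rcases r with _ | _ | r
    · omega
    · omega
    · have hC : ¬ (r + 2 = 0) := by omega
      have hD : ¬ (r + 2 = 1) := by omega
      simp [hC, hD]
  · -- cyclicity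
    intro hsurj v0 hv0 U hU0 hUcl
    have hcl0 : ∀ (x : g), ∀ u ∈ U, rho0 k V x u ∈ U := by
      intro x u hu
      simpa using hUcl 0 x u hu
    have hcl1 : ∀ (x : g), ∀ u ∈ U, rho1 k V p x u ∈ U := by
      intro x u hu
      simpa using hUcl 1 x u hu
    have main : ∀ t : Fin (k + 1), ∀ v : (V (t : ℕ)).V,
        DirectSum.lof ℂ (Fin (k + 1)) (fun t => (V (t : ℕ)).V) t v ∈ U := by
      intro t
      induction t using Fin.induction with
      | zero =>
        intro v
        have hU0' : Submodule.comap
            (DirectSum.lof ℂ (Fin (k + 1)) (fun t => (V (t : ℕ)).V) (0 : Fin (k + 1))) U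
              = ⊤ := by
          apply hv0
          · exact hU0
          · intro x u hu
            have hm := hcl0 x _ hu
            erw [rho0_lof] at hm
            exact hm
        have hv : v ∈ (⊤ : Submodule ℂ (V 0).V) := trivial
        have hv' := Submodule.eq_top_iff'.mp hU0' v
        exact hv'
      | succ i ih =>
        intro v
        have hgen : ∀ (x : g) (w : (V ((i.castSucc : Fin (k + 1)) : ℕ)).V),
            DirectSum.lof ℂ (Fin (k + 1)) (fun t => (V (t : ℕ)).V) i.succ
              (p ((i.castSucc : Fin (k + 1)) : ℕ) x w) ∈ U := by
          intro x w
          have hmem := hcl1 x _ (ih w)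
          rw [rho1_lof] at hmem
          rw [dif_pos (show ((i.castSucc : Fin (k + 1)) : ℕ) + 1 ≤ k from i.isLt)] at hmem
          exact hmem
        have hall : ∀ z : g ⊗[ℂ] (V ((i.castSucc : Fin (k + 1)) : ℕ)).V,
            DirectSum.lof ℂ (Fin (k + 1)) (fun t => (V (t : ℕ)).V) i.succ
              (TensorProduct.lift (p ((i.castSucc : Fin (k + 1)) : ℕ)) z) ∈ U := by
          intro z
          induction z using TensorProduct.induction_on with
          | zero => simpa using U.zero_mem
          | tmul x w => simpa using hgen x w
          | add a b ha hb =>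
            rw [map_add, map_add]
            exact U.add_mem ha hb
        obtain ⟨z, hz⟩ := hsurj ((i.castSucc : Fin (k + 1)) : ℕ) i.isLt v
        rw [← hz]
        exact hall z
    rw [Submodule.eq_top_iff']
    intro w
    induction w using DirectSum.induction_on with
    | zero => exact U.zero_mem
    | of i v =>
      have hm := main i v
      rw [DirectSum.lof_eq_of] at hm
      exact hm
    | add a b ha hb => exact U.add_mem ha hb

end KRPaper
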